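/- arXiv:1409.7515 — 7 statements merged into one kernel-verified Lean document; each statement's English description precedes it below -/
import Mathlib

section
/- Let $A$ be an approximately biprojective Banach algebra (there is a net of continuous $A$-bimodule maps $\rho_\alpha : A \to A \hat{\otimes} A$ with $\pi_A \circ \rho_\alpha(a) \to a$ for all $a \in A$) possessing a left approximate identity, and let $\phi$ be a character on $A$. Then $A$ is left $\phi$-contractible, i.e., for every $\varepsilon > 0$ there exists $m \in A$ with $\phi(m) = 1$ and $\|am - \phi(a)m\| \le \varepsilon \|a\|$ for all $a \in A$ (equivalently, there is a net $(m_\alpha)$ in $A$ with $a m_\alpha = \phi(a) m_\alpha$ and $\phi(m_\alpha) = 1$). -/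
/-!
Let `θ : A ⊗̂ A → A` be the contraction `a ⊗ b ↦ φ(b) a`. It is a left module map and turns the
right action of `A` into multiplication by `φ`. Hence for a biprojectivity map `ρ` the map `θ ∘ ρ`
satisfies `θ(ρ(x a)) = φ(a) θ(ρ x)`; testing this on a left approximate identity shows
`θ(ρ a) = φ(a) θ(ρ u)` for any `u` with `φ(u) = 1`. Then `m = θ(ρ u)` satisfies
`a m = θ(ρ(a u)) = φ(a) m`, and `φ(m) = φ(π(ρ u)) → φ(u) = 1` along the net, so some `m` has
`φ(m) ≠ 0` and can be normalised.
-/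

open Filter Topology

universe u

/-- An (in general non-unital) Banach algebra structure on a complex Banach space `A`:
a continuous (bounded) bilinear associative multiplication. -/
structure BanachAlgebraStr (A : Type u) [NormedAddCommGroup A] [NormedSpace ℂ A]
    [CompleteSpace A] : Type u where
  mul : A → A → A
  add_mul' : ∀ a b c, mul (a + b) c = mul a c + mul b c
  mul_add' : ∀ a b c, mul a (b + c) = mul a b + mul a c
  smul_mul' : ∀ (r : ℂ) (a b), mul (r • a) b = r • mul a b
  mul_smul' : ∀ (r : ℂ) (a b), mul a (r • b) = r • mul a b
  mul_assoc' : ∀ a b c, mul (mul a b) c = mul a (mul b c)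
  bound : ∃ C : ℝ, ∀ a b, ‖mul a b‖ ≤ C * ‖a‖ * ‖b‖

variable {A : Type u} [NormedAddCommGroup A] [NormedSpace ℂ A] [CompleteSpace A]

/-- A realization of the projective tensor product `A ⊗̂ A` of a Banach algebra with itself,
together with its Banach `A`-bimodule structure (`lsmul`, `rsmul`) and the
multiplication (diagonal) map `projL = π_A`. The defining properties of the projective
tensor product (projective norm bound, density of elementary tensors, and the universal
property for bounded bilinear maps) are part of the data. -/
structure TensorData (M : BanachAlgebraStr A) : Type (u + 1) where
  X : Type u
  [normedX : NormedAddCommGroup X]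
  [spaceX : NormedSpace ℂ X]
  [completeX : CompleteSpace X]
  tmul : A → A → X
  tmul_add_left : ∀ a b c, tmul (a + b) c = tmul a c + tmul b c
  tmul_add_right : ∀ a b c, tmul a (b + c) = tmul a b + tmul a c
  tmul_smul_left : ∀ (r : ℂ) (a b), tmul (r • a) b = r • tmul a b
  tmul_smul_right : ∀ (r : ℂ) (a b), tmul a (r • b) = r • tmul a b
  norm_tmul : ∀ a b, ‖tmul a b‖ ≤ ‖a‖ * ‖b‖
  dense_span : Dense (Submodule.span ℂ (Set.range fun p : A × A => tmul p.1 p.2) : Set X)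
  lift : ∀ (Y : Type u) [NormedAddCommGroup Y] [NormedSpace ℂ Y] [CompleteSpace Y]
      (B : A → A → Y) (C : ℝ),
      (∀ a b c, B (a + b) c = B a c + B b c) →
      (∀ a b c, B a (b + c) = B a b + B a c) →
      (∀ (r : ℂ) (a b), B (r • a) b = r • B a b) →
      (∀ (r : ℂ) (a b), B a (r • b) = r • B a b) →
      (∀ a b, ‖B a b‖ ≤ C * (‖a‖ * ‖b‖)) →
      ∃ L : X →L[ℂ] Y, (∀ a b, L (tmul a b) = B a b) ∧ ‖L‖ ≤ C
  lsmul : A → X →L[ℂ] X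
  rsmul : A → X →L[ℂ] X
  lsmul_tmul : ∀ a b c, lsmul a (tmul b c) = tmul (M.mul a b) c
  rsmul_tmul : ∀ a b c, rsmul a (tmul b c) = tmul b (M.mul c a)
  projL : X →L[ℂ] A
  projL_tmul : ∀ a b, projL (tmul a b) = M.mul a b

attribute [instance] TensorData.normedX TensorData.spaceX TensorData.completeX

/-- `A` is approximately biprojective: there is a net (formulated via a filter on an
index type) of continuous `A`-bimodule morphisms `ρ_i : A → A ⊗̂ A` with
`π_A ∘ ρ_i (a) → a` for every `a`. -/
def ApproxBiprojective (M : BanachAlgebraStr A) : Prop :=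
  ∃ T : TensorData M, ∃ (ι : Type u) (l : Filter ι) (ρ : ι → A →L[ℂ] T.X),
    l.NeBot ∧
    (∀ i a x, ρ i (M.mul a x) = T.lsmul a (ρ i x)) ∧
    (∀ i a x, ρ i (M.mul x a) = T.rsmul a (ρ i x)) ∧
    ∀ a : A, Tendsto (fun i => T.projL (ρ i a)) l (𝓝 a)

/-- A character on the Banach algebra `(A, M)`: a nonzero continuous multiplicative
linear functional. -/
structure IsCharacter (M : BanachAlgebraStr A) (φ : A →L[ℂ] ℂ) : Prop where
  map_mul' : ∀ a b, φ (M.mul a b) = φ a * φ b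
  ne_zero : φ ≠ 0

/-- `A` has a left approximate identity: a net `(e_i)` with `e_i * a → a` for all `a`. -/
def HasLeftApproxId (M : BanachAlgebraStr A) : Prop :=
  ∃ (ι : Type u) (l : Filter ι) (e : ι → A), l.NeBot ∧
    ∀ a : A, Tendsto (fun i => M.mul (e i) a) l (𝓝 a)

/-- `A` has a right approximate identity. -/
def HasRightApproxId (M : BanachAlgebraStr A) : Prop :=
  ∃ (ι : Type u) (l : Filter ι) (e : ι → A), l.NeBot ∧
    ∀ a : A, Tendsto (fun i => M.mul a (e i)) l (𝓝 a)

namespace BanachAlgebraStr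

variable (M : BanachAlgebraStr A)

noncomputable def mulLeft (a : A) : A →L[ℂ] A :=
  LinearMap.mkContinuous
    { toFun := M.mul a
      map_add' := M.mul_add' a
      map_smul' := fun r b => M.mul_smul' r a b }
    (M.bound.choose * ‖a‖)
    (fun b => by simpa [mul_assoc] using M.bound.choose_spec a b)

@[simp]
theorem mulLeft_apply (a b : A) : M.mulLeft a b = M.mul a b := rfl

end BanachAlgebraStr

theorem IsCharacter.exists_apply_eq_one {M : BanachAlgebraStr A} {φ : A →L[ℂ] ℂ}
    (hφ : IsCharacter M φ) : ∃ u : A, φ u = 1 := by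
  obtain ⟨v, hv⟩ : ∃ v : A, φ v ≠ 0 := by
    by_contra! h
    exact hφ.ne_zero (ContinuousLinearMap.ext h)
  exact ⟨(φ v)⁻¹ • v, by simp [inv_mul_cancel₀ hv]⟩

namespace TensorData

variable {M : BanachAlgebraStr A} (T : TensorData M)

theorem ext_tmul {Y : Type*} [NormedAddCommGroup Y] [NormedSpace ℂ Y] {f g : T.X →L[ℂ] Y}
    (h : ∀ a b, f (T.tmul a b) = g (T.tmul a b)) : f = g :=
  ContinuousLinearMap.ext_on T.dense_span (by rintro - ⟨⟨a, b⟩, rfl⟩; exact h a b)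

theorem exists_contractRight (φ : A →L[ℂ] ℂ) :
    ∃ θ : T.X →L[ℂ] A, ∀ a b, θ (T.tmul a b) = φ b • a :=
  (T.lift A (fun a b => φ b • a) ‖φ‖
    (fun a b c => by simp [smul_add])
    (fun a b c => by simp [add_smul])
    (fun r a b => by simp [smul_comm r])
    (fun r a b => by simp [mul_smul])
    (fun a b => by
      rw [norm_smul, mul_comm ‖a‖, ← mul_assoc]
      exact mul_le_mul_of_nonneg_right (φ.le_opNorm b) (norm_nonneg a))).imp fun _ h => h.1

noncomputable def contractRight (φ : A →L[ℂ] ℂ) : T.X →L[ℂ] A :=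
  (T.exists_contractRight φ).choose

@[simp]
theorem contractRight_tmul (φ : A →L[ℂ] ℂ) (a b : A) :
    T.contractRight φ (T.tmul a b) = φ b • a :=
  (T.exists_contractRight φ).choose_spec a b

theorem contractRight_lsmul (φ : A →L[ℂ] ℂ) (a : A) (x : T.X) :
    T.contractRight φ (T.lsmul a x) = M.mul a (T.contractRight φ x) := by
  have : (T.contractRight φ).comp (T.lsmul a) = (M.mulLeft a).comp (T.contractRight φ) :=
    T.ext_tmul fun b c => by simp [T.lsmul_tmul]
  exact congr($this x)

variable {φ : A →L[ℂ] ℂ} (hφ : IsCharacter M φ)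
include hφ

theorem contractRight_rsmul (a : A) (x : T.X) :
    T.contractRight φ (T.rsmul a x) = φ a • T.contractRight φ x := by
  have : (T.contractRight φ).comp (T.rsmul a) = φ a • T.contractRight φ :=
    T.ext_tmul fun b c => by simp [T.rsmul_tmul, hφ.map_mul', mul_smul, smul_comm (φ a)]
  exact congr($this x)

theorem apply_contractRight (x : T.X) : φ (T.contractRight φ x) = φ (T.projL x) := by
  have : φ.comp (T.contractRight φ) = φ.comp T.projL :=
    T.ext_tmul fun b c => by simp [T.projL_tmul, hφ.map_mul', mul_comm]
  exact congr($this x)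

end TensorData

theorem HasLeftApproxId.eq_smul_of_map_mul_right {M : BanachAlgebraStr A}
    (hlai : HasLeftApproxId M) {φ : A →L[ℂ] ℂ} {u : A} (hu : φ u = 1)
    {Y : Type*} [NormedAddCommGroup Y] [NormedSpace ℂ Y] (f : A →L[ℂ] Y)
    (hf : ∀ x a, f (M.mul x a) = φ a • f x) (a : A) : f a = φ a • f u := by
  obtain ⟨ι, l, e, hl, he⟩ := hlai
  have hlim : ∀ b, Tendsto (fun j => φ b • f (e j)) l (𝓝 (f b)) := fun b => by
    simpa only [Function.comp_def, hf] using (f.continuous.tendsto b).comp (he b)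
  have hfu : Tendsto (fun j => f (e j)) l (𝓝 (f u)) := by simpa [hu] using hlim u
  exact tendsto_nhds_unique (hlim a) (hfu.const_smul (φ a))

theorem ApproxBiprojective.exists_leftCharacterMean {M : BanachAlgebraStr A}
    (hbp : ApproxBiprojective M) (hlai : HasLeftApproxId M) {φ : A →L[ℂ] ℂ}
    (hφ : IsCharacter M φ) : ∃ m : A, φ m = 1 ∧ ∀ a, M.mul a m = φ a • m := by
  obtain ⟨u, hu⟩ := hφ.exists_apply_eq_one
  obtain ⟨T, ι, l, ρ, hl, hρl, hρr, hρ⟩ := hbp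
  set θ := T.contractRight φ
  have hθρ : ∀ i a, θ (ρ i a) = φ a • θ (ρ i u) := fun i =>
    hlai.eq_smul_of_map_mul_right hu (θ.comp (ρ i)) fun x a => by
      simp [hρr, θ, T.contractRight_rsmul hφ]
  have hmean : ∀ i a, M.mul a (θ (ρ i u)) = φ a • θ (ρ i u) := fun i a => by
    rw [← T.contractRight_lsmul, ← hρl, hθρ, hφ.map_mul', hu, mul_one]
  have hφlim : Tendsto (fun i => φ (θ (ρ i u))) l (𝓝 1) := by
    simpa only [Function.comp_def, θ, T.apply_contractRight hφ, hu] using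
      (φ.continuous.tendsto u).comp (hρ u)
  obtain ⟨i, hi⟩ := (hφlim.eventually_ne one_ne_zero).exists
  refine ⟨(φ (θ (ρ i u)))⁻¹ • θ (ρ i u), by simp [inv_mul_cancel₀ hi], fun a => ?_⟩
  rw [M.mul_smul', hmean, smul_comm]

/-- If `A` is an approximately biprojective Banach algebra with a left
approximate identity and `φ` is a character on `A`, then `A` is left `φ`-contractible
(in the approximate, equivalent, formulation): for every `ε > 0` there is `m ∈ A` with
`φ(m) = 1` and `‖a m − φ(a) m‖ ≤ ε ‖a‖` for all `a`. -/
theorem approxBiprojective_leftApproxId_leftContractible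
    {A : Type u} [NormedAddCommGroup A] [NormedSpace ℂ A] [CompleteSpace A]
    (M : BanachAlgebraStr A) (hbp : ApproxBiprojective M) (hlai : HasLeftApproxId M)
    (φ : A →L[ℂ] ℂ) (hφ : IsCharacter M φ) :
    ∀ ε : ℝ, 0 < ε → ∃ m : A, φ m = 1 ∧ ∀ a : A, ‖M.mul a m - φ a • m‖ ≤ ε * ‖a‖ := by
  intro ε hε
  obtain ⟨m, hm, hmean⟩ := hbp.exists_leftCharacterMean hlai hφ
  exact ⟨m, hm, fun a => by rw [hmean, sub_self, norm_zero]; positivity⟩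
end

section
/- Let $S$ be a right zero semigroup with $|S| \geq 2$. Then $\ell^1(S)$ has no right approximate identity. Consequently, $\ell^1(S)$ is not pseudo-contractible. -/
open Filter Topology

noncomputable section

universe u v

/-- `f` belongs to `ℓ¹(X)`. -/
def Mem1 {X : Type u} (f : X → ℂ) : Prop := Summable fun x => ‖f x‖

/-- Convolution product on `ℓ¹(S)`: `(f * g)(t) = ∑_{uv = t} f(u) g(v)`. -/
def conv {S : Type u} [Mul S] (f g : S → ℂ) (t : S) : ℂ :=
  ∑' p : {p : S × S // p.1 * p.2 = t}, f p.val.1 * g p.val.2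

/-- The left module action of `ℓ¹(S)` on `ℓ¹(S) ⊗̂ ℓ¹(S) = ℓ¹(S × S)`:
`a · (b ⊗ c) = (a * b) ⊗ c`, i.e. convolution in the first variable. -/
def tconvL {S : Type u} [Mul S] (a : S → ℂ) (m : S × S → ℂ) (q : S × S) : ℂ :=
  ∑' p : {p : S × S // p.1 * p.2 = q.1}, a p.val.1 * m (p.val.2, q.2)

/-- The right module action of `ℓ¹(S)` on `ℓ¹(S × S)`: `(b ⊗ c) · a = b ⊗ (c * a)`. -/
def tconvR {S : Type u} [Mul S] (a : S → ℂ) (m : S × S → ℂ) (q : S × S) : ℂ :=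
  ∑' p : {p : S × S // p.1 * p.2 = q.2}, m (q.1, p.val.1) * a p.val.2

/-- The multiplication map `π : ℓ¹(S × S) = ℓ¹(S) ⊗̂ ℓ¹(S) → ℓ¹(S)`. -/
def tpi {S : Type u} [Mul S] (m : S × S → ℂ) (t : S) : ℂ :=
  ∑' p : {p : S × S // p.1 * p.2 = t}, m p.val

open Classical in
/-- The point mass `δ_s ∈ ℓ¹(S)`. -/
def delta {S : Type u} (s t : S) : ℂ := if t = s then 1 else 0

/-- `ρ : ℓ¹(S) → ℓ¹(S) ⊗̂ ℓ¹(S) = ℓ¹(S × S)` is a continuous (bounded)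
`ℓ¹(S)`-bimodule morphism. -/
structure IsL1BimodMor {S : Type u} [Mul S] (ρ : (S → ℂ) → S × S → ℂ) : Prop where
  maps : ∀ f, Mem1 f → Mem1 (ρ f)
  map_add : ∀ f g, Mem1 f → Mem1 g → ρ (f + g) = ρ f + ρ g
  map_smul : ∀ (c : ℂ) (f), Mem1 f → ρ (c • f) = c • ρ f
  bound : ∃ C : ℝ, ∀ f, Mem1 f → (∑' q, ‖ρ f q‖) ≤ C * ∑' s, ‖f s‖
  left_mod : ∀ a f, Mem1 a → Mem1 f → ρ (conv a f) = tconvL a (ρ f)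
  right_mod : ∀ a f, Mem1 a → Mem1 f → ρ (conv f a) = tconvR a (ρ f)

/-- `ℓ¹(S)` is approximately biprojective: a net (indexed along a filter) of continuous
`ℓ¹(S)`-bimodule morphisms `ρ_i : ℓ¹(S) → ℓ¹(S) ⊗̂ ℓ¹(S) = ℓ¹(S × S)` with
`π ∘ ρ_i (f) → f` in the `ℓ¹`-norm for every `f ∈ ℓ¹(S)`. -/
def L1ApproxBiproj (S : Type u) [Mul S] : Prop :=
  ∃ (ι : Type) (l : Filter ι) (ρ : ι → (S → ℂ) → S × S → ℂ), l.NeBot ∧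
    (∀ i, IsL1BimodMor (ρ i)) ∧
    ∀ f, Mem1 f → Tendsto (fun i => ∑' t, ‖tpi (ρ i f) t - f t‖) l (𝓝 0)

/-- `ℓ¹(S)` is pseudo-contractible: a net `(m_i)` in `ℓ¹(S) ⊗̂ ℓ¹(S) = ℓ¹(S × S)` with
`a · m_i = m_i · a` and `π(m_i) * a → a` for every `a ∈ ℓ¹(S)`. -/
def L1PseudoContractible (S : Type u) [Mul S] : Prop :=
  ∃ (ι : Type) (l : Filter ι) (m : ι → S × S → ℂ), l.NeBot ∧
    (∀ i, Mem1 (m i)) ∧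
    (∀ i a, Mem1 a → tconvL a (m i) = tconvR a (m i)) ∧
    ∀ a, Mem1 a → Tendsto (fun i => ∑' t, ‖conv (tpi (m i)) a t - a t‖) l (𝓝 0)

end

noncomputable section Aux

variable {S : Type*} [Mul S]

/-- Equivalence between `S` and pairs multiplying to `t` in a right zero semigroup. -/
def rzEquiv (hz : ∀ s t : S, s * t = t) (t : S) : S ≃ {p : S × S // p.1 * p.2 = t} where
  toFun s := ⟨(s, t), hz s t⟩
  invFun p := p.val.1
  left_inv s := rfl
  right_inv p := by
    obtain ⟨⟨a, b⟩, h⟩ := p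
    have hb : b = t := by rw [← h, hz]
    subst hb; rfl

lemma conv_eq (hz : ∀ s t : S, s * t = t) (f g : S → ℂ) (t : S) :
    conv f g t = (∑' s, f s) * g t := by
  rw [conv, ← tsum_mul_right]
  exact ((rzEquiv hz t).tsum_eq fun p => f p.val.1 * g p.val.2).symm

lemma tconvL_eq (hz : ∀ s t : S, s * t = t) (a : S → ℂ) (m : S × S → ℂ) (q : S × S) :
    tconvL a m q = (∑' s, a s) * m q := by
  rw [tconvL, ← tsum_mul_right]
  exact ((rzEquiv hz q.1).tsum_eq fun p => a p.val.1 * m (p.val.2, q.2)).symm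

lemma tconvR_eq (hz : ∀ s t : S, s * t = t) (a : S → ℂ) (m : S × S → ℂ) (q : S × S) :
    tconvR a m q = (∑' s, m (q.1, s)) * a q.2 := by
  rw [tconvR, ← tsum_mul_right]
  exact ((rzEquiv hz q.2).tsum_eq fun p => m (q.1, p.val.1) * a p.val.2).symm

lemma tpi_eq (hz : ∀ s t : S, s * t = t) (m : S × S → ℂ) (t : S) :
    tpi m t = ∑' s, m (s, t) := by
  rw [tpi]
  exact ((rzEquiv hz t).tsum_eq fun p => m p.val).symm

lemma tsum_delta (u : S) : ∑' x, delta u x = (1 : ℂ) := by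
  simp [delta, tsum_ite_eq]

lemma tsum_norm_delta (u : S) : ∑' x, ‖delta u x‖ = (1 : ℝ) := by
  simp [delta, apply_ite, tsum_ite_eq]

lemma mem1_delta (u : S) : Mem1 (delta u) := by
  apply summable_of_ne_finset_zero (s := {u})
  intro x hx
  simp only [Finset.mem_singleton] at hx
  simp [delta, hx]

end Aux

/-- If `S` is a right zero semigroup with at least two elements, then
`ℓ¹(S)` has no right approximate identity; consequently `ℓ¹(S)` is not
pseudo-contractible. -/
theorem rightZero_no_rai {S : Type*} [Mul S] (hz : ∀ s t : S, s * t = t)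
    (h2 : ∃ s t : S, s ≠ t) :
    (¬ ∃ (ι : Type) (l : Filter ι) (e : ι → S → ℂ), l.NeBot ∧ (∀ i, Mem1 (e i)) ∧
        ∀ f, Mem1 f → Filter.Tendsto (fun i => ∑' t, ‖conv f (e i) t - f t‖) l (nhds 0)) ∧
    ¬ L1PseudoContractible S := by
  classical
  obtain ⟨s, t, hst⟩ := h2
  constructor
  · rintro ⟨ι, l, e, hne, hmem, htend⟩
    have hds := mem1_delta (S := S) s
    have hdt := mem1_delta (S := S) t
    have hs := htend _ hds
    have ht := htend _ hdt
    simp only [conv_eq hz, tsum_delta, one_mul] at hs ht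
    have hsumδ : Summable fun x => ‖delta s x - delta t x‖ :=
      Summable.of_nonneg_of_le (fun x => norm_nonneg _) (fun x => norm_sub_le _ _)
        (hds.add hdt)
    have key : ∀ i, (2 : ℝ) ≤ (∑' x, ‖e i x - delta s x‖) + ∑' x, ‖e i x - delta t x‖ := by
      intro i
      have hsum1 : Summable fun x => ‖e i x - delta s x‖ :=
        Summable.of_nonneg_of_le (fun x => norm_nonneg _) (fun x => norm_sub_le _ _)
          ((hmem i).add hds)
      have hsum2 : Summable fun x => ‖e i x - delta t x‖ :=
        Summable.of_nonneg_of_le (fun x => norm_nonneg _) (fun x => norm_sub_le _ _)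
          ((hmem i).add hdt)
      have h2sum : (2 : ℝ) ≤ ∑' x, ‖delta s x - delta t x‖ := by
        have hle := Summable.sum_le_tsum ({s, t} : Finset S) (fun x _ => norm_nonneg _) hsumδ
        have hval : ∑ x ∈ ({s, t} : Finset S), ‖delta s x - delta t x‖ = 2 := by
          rw [Finset.sum_insert (by simpa using hst), Finset.sum_singleton]
          simp [delta, hst, Ne.symm hst]
          norm_num
        linarith
      have hpt : ∀ x, ‖delta s x - delta t x‖ ≤ ‖e i x - delta s x‖ + ‖e i x - delta t x‖ := by
        intro x
        have : delta s x - delta t x = (e i x - delta t x) - (e i x - delta s x) := by ring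
        rw [this]
        calc ‖(e i x - delta t x) - (e i x - delta s x)‖
            ≤ ‖e i x - delta t x‖ + ‖e i x - delta s x‖ := norm_sub_le _ _
          _ = ‖e i x - delta s x‖ + ‖e i x - delta t x‖ := add_comm _ _
      calc (2 : ℝ) ≤ ∑' x, ‖delta s x - delta t x‖ := h2sum
        _ ≤ ∑' x, (‖e i x - delta s x‖ + ‖e i x - delta t x‖) :=
            Summable.tsum_le_tsum hpt hsumδ (hsum1.add hsum2)
        _ = _ := Summable.tsum_add hsum1 hsum2
    have hlim : Tendsto (fun i => (∑' x, ‖e i x - delta s x‖) + ∑' x, ‖e i x - delta t x‖)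
        l (𝓝 0) := by
      simpa using hs.add ht
    have := ge_of_tendsto' hlim key
    linarith
  · rintro ⟨ι, l, m, hne, hmem, hcen, htend⟩
    have hm0 : ∀ i q, m i q = 0 := by
      intro i q
      obtain ⟨x, y⟩ := q
      have Es : ∀ q : S × S, m i q = (∑' z, m i (q.1, z)) * delta s q.2 := by
        intro q
        have hc := congrFun (hcen i (delta s) (mem1_delta s)) q
        rwa [tconvL_eq hz, tconvR_eq hz, tsum_delta, one_mul] at hc
      have Et : ∀ q : S × S, m i q = (∑' z, m i (q.1, z)) * delta t q.2 := by
        intro q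
        have hc := congrFun (hcen i (delta t) (mem1_delta t)) q
        rwa [tconvL_eq hz, tconvR_eq hz, tsum_delta, one_mul] at hc
      have hMs : m i (x, s) = 0 := by
        have h := Et (x, s)
        simpa [delta, hst] using h
      have hM : (∑' z, m i (x, z)) = 0 := by
        have h := Es (x, s)
        rw [hMs] at h
        simp [delta] at h
        first
        | exact h.symm
        | exact h
      have h := Es (x, y)
      simp only at h
      rw [hM, zero_mul] at h
      exact h
    have hzero : ∀ i x, conv (tpi (m i)) (delta s) x = 0 := by
      intro i x
      rw [conv_eq hz]
      have htp : ∀ u, tpi (m i) u = 0 := by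
        intro u
        rw [tpi_eq hz]
        simp [hm0]
      simp [htp]
    have h1 := htend (delta s) (mem1_delta s)
    have hconst : Tendsto (fun _ : ι => (1 : ℝ)) l (𝓝 0) := by
      have : (fun i => ∑' x, ‖conv (tpi (m i)) (delta s) x - delta s x‖)
          = fun _ : ι => (1 : ℝ) := by
        funext i
        simp only [hzero, zero_sub, norm_neg]
        exact tsum_norm_delta s
      rwa [this] at h1
    exact zero_ne_one (tendsto_nhds_unique hconst tendsto_const_nhds)
end

section
/- Let $S = \{\begin{pmatrix} 0 & a \\ 0 & 0 \end{pmatrix} : a \in \mathbb{C}\}$ with matrix multiplication (so $st = s_0$ for all $s, t \in S$, where $s_0$ is the zero matrix). Then $\ell^1(S)$ is not approximately biprojective. -/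
open Filter Topology

/-- The semigroup `S = { [0 a; 0 0] : a ∈ ℂ }` under matrix multiplication
(every product is the zero matrix). -/
def S6 : Set (Matrix (Fin 2) (Fin 2) ℂ) := {M | ∃ a : ℂ, M = !![0, a; 0, 0]}

noncomputable instance : Mul S6 :=
  ⟨fun s t => ⟨s.1 * t.1, by
    obtain ⟨a, ha⟩ := s.2
    obtain ⟨b, hb⟩ := t.2
    exact ⟨0, by rw [ha, hb, Matrix.mul_fin_two]; norm_num⟩⟩⟩

def s0 : S6 := ⟨!![0, 0; 0, 0], ⟨0, rfl⟩⟩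
def s1 : S6 := ⟨!![0, 1; 0, 0], ⟨1, rfl⟩⟩

lemma mul_eq_s0 (s t : S6) : s * t = s0 := by
  obtain ⟨a, ha⟩ := s.2
  obtain ⟨b, hb⟩ := t.2
  apply Subtype.ext
  show s.1 * t.1 = _
  rw [ha, hb, Matrix.mul_fin_two]
  show _ = !![0,0;0,0]
  norm_num

lemma s1_ne_s0 : s1 ≠ s0 := by
  intro h
  have := congrArg (fun x : S6 => x.1 0 1) h
  simp [s0, s1] at this

lemma tpi_ne_s0 (m : S6 × S6 → ℂ) (t : S6) (ht : t ≠ s0) : tpi m t = 0 := by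
  have : IsEmpty {p : S6 × S6 // p.1 * p.2 = t} := by
    constructor
    rintro ⟨⟨u, v⟩, h⟩
    exact ht (h ▸ mul_eq_s0 u v)
  exact tsum_empty

/-- For the semigroup `S = { [0 a; 0 0] : a ∈ ℂ }` (in which every product
is the zero matrix `s₀`), the semigroup algebra `ℓ¹(S)` is not approximately
biprojective. -/
theorem S6_not_approxBiprojective : ¬ L1ApproxBiproj S6 := by
  rintro ⟨ι, l, ρ, hne, hmor, htend⟩
  classical
  have hmem : Mem1 (delta s1) := by
    apply summable_of_ne_finset_zero (s := {s1})
    intro t ht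
    simp only [Finset.mem_singleton] at ht
    simp [delta, ht]
  have h := htend (delta s1) hmem
  have hone : ∀ i, (1 : ℝ) ≤ ∑' t, ‖tpi (ρ i (delta s1)) t - delta s1 t‖ := by
    intro i
    have hsum : Summable fun t => ‖tpi (ρ i (delta s1)) t - delta s1 t‖ := by
      apply summable_of_ne_finset_zero (s := {s0, s1})
      intro t ht
      simp only [Finset.mem_insert, Finset.mem_singleton, not_or] at ht
      rw [tpi_ne_s0 _ _ ht.1]
      simp [delta, ht.2]
    have := Summable.le_tsum hsum s1 (fun t _ => norm_nonneg _)
    refine le_trans ?_ this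
    rw [tpi_ne_s0 _ _ s1_ne_s0]
    simp [delta]
  have : (1 : ℝ) ≤ 0 := ge_of_tendsto h (Filter.Eventually.of_forall hone)
  linarith
end

section
/- Let $A$ be a Banach algebra with a left approximate identity $(e_\alpha)$ and a character $\phi$. Consider the triangular Banach algebra $T = \begin{pmatrix} A & A \\ 0 & A \end{pmatrix}$ and the character $\psi_\phi\begin{pmatrix} a & x \\ 0 & b \end{pmatrix} = \phi(b)$. Then the closed ideal $I = \begin{pmatrix} 0 & A \\ 0 & A \end{pmatrix}$ of $T$ is not left $\psi_\phi|_I$-contractible; i.e., there is no element $\begin{pmatrix} 0 & i \\ 0 & j \end{pmatrix} \in I$ with $\phi(j) = 1$ and $u v = \psi_\phi(u) v$ for $v = \begin{pmatrix} 0 & i \\ 0 & j \end{pmatrix}$ and all $u \in I$. -/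
open Filter Topology

universe u

variable {A : Type u} [NormedAddCommGroup A] [NormedSpace ℂ A] [CompleteSpace A]

/-- Let `A` be a Banach algebra with a left approximate identity and a
character `φ`. In the triangular Banach algebra `T = [A A; 0 A]` (realized on
`A × A × A`, a triple `(a, x, b)` standing for the matrix `[a x; 0 b]`, with the
triangular matrix multiplication `MT`), the closed ideal `I = [0 A; 0 A] = {v : v.1 = 0}`
is not left `ψ_φ`-contractible, where `ψ_φ(a,x,b) = φ(b)`: there is no `v ∈ I` with
`φ(v.2.2) = 1` and `u * v = ψ_φ(u) • v` for all `u ∈ I`. -/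
theorem ideal_not_left_contractible {A : Type u} [NormedAddCommGroup A]
    [NormedSpace ℂ A] [CompleteSpace A] (M : BanachAlgebraStr A) (φ : A →L[ℂ] ℂ)
    (hφ : IsCharacter M φ) (hlai : HasLeftApproxId M)
    (MT : BanachAlgebraStr (A × A × A))
    (hmul : ∀ u v : A × A × A, MT.mul u v
      = (M.mul u.1 v.1, M.mul u.1 v.2.1 + M.mul u.2.1 v.2.2, M.mul u.2.2 v.2.2)) :
    ¬ ∃ v : A × A × A, v.1 = 0 ∧ φ v.2.2 = 1 ∧
        ∀ u : A × A × A, u.1 = 0 → MT.mul u v = φ u.2.2 • v := by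
  rintro ⟨⟨a0, i, j⟩, hv1, hφj, hmod⟩
  simp only at hv1 hφj
  have hzero : ∀ a b : A, M.mul (0 : A) b = (0 : A) := by
    intro a b
    have := M.smul_mul' 0 a b
    simpa using this
  -- For any x : A, M.mul x j = 0.
  have hxj : ∀ x : A, M.mul x j = 0 := by
    intro x
    have h := hmod (0, x, 0) rfl
    rw [hmul] at h
    simp only at h
    have h2 := congrArg (fun p : A × A × A => p.2.1) h
    simp only [map_zero, zero_smul] at h2
    rw [hzero x i] at h2
    simpa using h2
  obtain ⟨ι, l, e, hne, hten⟩ := hlai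
  have hj : j = 0 := by
    have h1 : Tendsto (fun i' => M.mul (e i') j) l (𝓝 j) := hten j
    have h2 : Tendsto (fun _ : ι => (0 : A)) l (𝓝 (0 : A)) := tendsto_const_nhds
    have : (fun i' => M.mul (e i') j) = fun _ : ι => (0 : A) := by
      funext i'; exact hxj (e i')
    rw [this] at h1
    exact tendsto_nhds_unique h1 h2
  rw [hj] at hφj
  simp at hφj
end

section
/- Let $A$ be a Banach algebra with a left approximate identity and a character $\phi$. Then the triangular Banach algebra $T = \begin{pmatrix} A & A \\ 0 & A \end{pmatrix}$ is not approximately biprojective. -/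
open Filter Topology

universe u

variable {A : Type u} [NormedAddCommGroup A] [NormedSpace ℂ A] [CompleteSpace A]

/-- Let `A` be a Banach algebra with a left approximate identity and a
character `φ`. Then the triangular Banach algebra `T = [A A; 0 A]` (realized on
`A × A × A` with the triangular matrix multiplication) is not approximately
biprojective. -/
theorem triangular_not_approxBiprojective {A : Type u} [NormedAddCommGroup A]
    [NormedSpace ℂ A] [CompleteSpace A] (M : BanachAlgebraStr A) (φ : A →L[ℂ] ℂ)
    (hφ : IsCharacter M φ) (hlai : HasLeftApproxId M)
    (MT : BanachAlgebraStr (A × A × A))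
    (hmul : ∀ u v : A × A × A, MT.mul u v
      = (M.mul u.1 v.1, M.mul u.1 v.2.1 + M.mul u.2.1 v.2.2, M.mul u.2.2 v.2.2)) :
    ¬ ApproxBiprojective MT := by
  rintro ⟨TD, ι, l, ρ, hne, hlρ, hrρ, htend⟩
  haveI := hne
  -- zero lemmas for M.mul
  have hz1 : ∀ b : A, M.mul 0 b = 0 := fun b => by
    have h := M.smul_mul' 0 b b; simpa using h
  have hz2 : ∀ b : A, M.mul b 0 = 0 := fun b => by
    have h := M.mul_smul' 0 b b; simpa using h
  -- pick a with φ a = 1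
  obtain ⟨a₀, ha₀⟩ : ∃ a₀, φ a₀ ≠ 0 := by
    by_contra h
    push_neg at h
    exact hφ.ne_zero (ContinuousLinearMap.ext fun x => by simp [h x])
  set a : A := (φ a₀)⁻¹ • a₀ with ha_def
  have ha : φ a = 1 := by simp [ha_def, inv_mul_cancel₀ ha₀]
  -- two functionals on T = A × A × A
  set ψ : (A × A × A) →L[ℂ] ℂ :=
    φ.comp ((ContinuousLinearMap.snd ℂ A A).comp (ContinuousLinearMap.snd ℂ A (A × A)))
    with hψdef
  set χ : (A × A × A) →L[ℂ] ℂ :=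
    φ.comp ((ContinuousLinearMap.fst ℂ A A).comp (ContinuousLinearMap.snd ℂ A (A × A)))
    with hχdef
  have hψ : ∀ t : A × A × A, ψ t = φ t.2.2 := fun t => rfl
  have hχ : ∀ t : A × A × A, χ t = φ t.2.1 := fun t => rfl
  have hψmul : ∀ s t : A × A × A, ψ (MT.mul s t) = ψ s * ψ t := by
    intro s t
    rw [hψ, hψ, hψ, hmul]
    exact hφ.map_mul' _ _
  -- slice map L(c ⊗ d) = ψ(d) • c
  obtain ⟨L, hLtmul, -⟩ := TD.lift (A × A × A) (fun c d => ψ d • c) ‖ψ‖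
    (fun c c' d => smul_add _ _ _)
    (fun c d d' => by show ψ (d + d') • c = ψ d • c + ψ d' • c; rw [map_add, add_smul])
    (fun r c d => smul_comm _ _ _)
    (fun r c d => by show ψ (r • d) • c = r • ψ d • c; rw [map_smul, smul_eq_mul, mul_smul])
    (fun c d => by
      calc ‖ψ d • c‖ = ‖ψ d‖ * ‖c‖ := norm_smul _ _
        _ ≤ (‖ψ‖ * ‖d‖) * ‖c‖ :=
            mul_le_mul_of_nonneg_right (ψ.le_opNorm d) (norm_nonneg c)
        _ = ‖ψ‖ * (‖c‖ * ‖d‖) := by ring)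
  -- extensionality via density of elementary tensors
  have hext : ∀ f g : TD.X →L[ℂ] ℂ,
      (∀ c d, f (TD.tmul c d) = g (TD.tmul c d)) → f = g := by
    intro f g h
    have h1 : Set.EqOn f g (Submodule.span ℂ
        (Set.range fun p : (A × A × A) × (A × A × A) => TD.tmul p.1 p.2) : Set TD.X) := by
      intro x hx
      induction hx using Submodule.span_induction with
      | mem x hx => obtain ⟨p, rfl⟩ := hx; exact h p.1 p.2
      | zero => simp
      | add x y _ _ hx hy => simp only [map_add, hx, hy]
      | smul r x _ hx => simp only [map_smul, hx]
    have h2 : Set.EqOn f g (closure (Submodule.span ℂ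
        (Set.range fun p : (A × A × A) × (A × A × A) => TD.tmul p.1 p.2) : Set TD.X)) :=
      h1.closure f.continuous g.continuous
    exact ContinuousLinearMap.ext fun x =>
      h2 (by rw [TD.dense_span.closure_eq]; trivial)
  -- the three special elements
  set u : A × A × A := (a, 0, 0) with hu
  set q : A × A × A := (0, a, 0) with hqdef
  set t₀ : A × A × A := (0, 0, a) with ht₀
  have hψq : ψ q = 0 := by rw [hψ]; simp [hqdef]
  have huq : MT.mul u q = MT.mul q t₀ := by
    rw [hmul, hmul]
    simp [hu, hqdef, ht₀, hz1, hz2]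
  -- claim C : χ ∘ L ∘ rsmul q = 0
  have hC : χ.comp (L.comp (TD.rsmul q)) = 0 := by
    apply hext
    intro c d
    show χ (L (TD.rsmul q (TD.tmul c d))) = (0 : TD.X →L[ℂ] ℂ) (TD.tmul c d)
    rw [TD.rsmul_tmul, hLtmul, map_smul, hψmul, hψq]
    simp
  -- claim D : χ ∘ L ∘ lsmul q = φ a • (ψ ∘ projL)
  have hD : χ.comp (L.comp (TD.lsmul q)) = φ a • (ψ.comp TD.projL) := by
    apply hext
    intro c d
    show χ (L (TD.lsmul q (TD.tmul c d))) = (φ a • ψ.comp TD.projL) (TD.tmul c d)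
    rw [TD.lsmul_tmul, hLtmul, map_smul]
    have hqc : χ (MT.mul q c) = φ a * φ c.2.2 := by
      rw [hχ, hmul]
      show φ (M.mul 0 c.2.1 + M.mul a c.2.2) = φ a * φ c.2.2
      rw [hz1, zero_add]
      exact hφ.map_mul' _ _
    rw [smul_eq_mul, hqc]
    simp only [ContinuousLinearMap.smul_apply, ContinuousLinearMap.comp_apply,
      TD.projL_tmul, hψmul, hψ, smul_eq_mul]
    ring
  -- evaluate the constant-zero net
  have key1 : ∀ i, χ (L (ρ i (MT.mul u q))) = 0 := by
    intro i
    rw [hrρ i q u]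
    have := ContinuousLinearMap.ext_iff.mp hC (ρ i u)
    simpa using this
  -- the same net tends to 1
  have key2 : Tendsto (fun i => χ (L (ρ i (MT.mul u q)))) l (𝓝 1) := by
    have h1 : ∀ i, χ (L (ρ i (MT.mul u q))) = φ a * ψ (TD.projL (ρ i t₀)) := by
      intro i
      rw [huq, hlρ i q t₀]
      have := ContinuousLinearMap.ext_iff.mp hD (ρ i t₀)
      simpa [smul_eq_mul] using this
    have h2 : Tendsto (fun i => φ a * ψ (TD.projL (ρ i t₀))) l (𝓝 (φ a * ψ t₀)) :=
      ((ψ.continuous.tendsto t₀).comp (htend t₀)).const_mul (φ a)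
    have hψt₀ : ψ t₀ = 1 := by rw [hψ]; simpa [ht₀] using ha
    have hlim : φ a * ψ t₀ = 1 := by rw [hψt₀, ha, mul_one]
    rw [hlim] at h2
    exact h2.congr fun i => (h1 i).symm
  have h0 : Tendsto (fun i => χ (L (ρ i (MT.mul u q)))) l (𝓝 0) := by
    simp only [key1]
    exact tendsto_const_nhds
  exact zero_ne_one (tendsto_nhds_unique h0 key2)
end

section
/- Let $A$ be a Banach algebra and $\Lambda$ a nonempty set. The map $\theta : \mathbb{M}_\Lambda(A) \to A \hat{\otimes}_p \mathbb{M}_\Lambda(\mathbb{C})$ defined by $\theta((a_{ij})) = \sum_{i,j} a_{ij} \otimes E_{ij}$ is an isometric algebra isomorphism, where $\mathbb{M}_\Lambda(A)$ is the $\ell^1$-Munn algebra of $\Lambda \times \Lambda$ matrices over $A$ with $\sum_{i,j}\|a_{ij}\| < \infty$, and $E_{ij}$ are the matrix units. -/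
open Filter Topology

universe u

variable {A : Type u} [NormedAddCommGroup A] [NormedSpace ℂ A] [CompleteSpace A]

/-- A realization of the projective tensor product `A ⊗̂ B` of two Banach algebras,
as a Banach algebra `C` with a bounded bilinear, multiplicative map `(a,b) ↦ a ⊗ b`
whose elementary tensors span densely, carrying the projective norm bound and the
universal property. -/
structure TensorAlgData {A B : Type u}
    [NormedAddCommGroup A] [NormedSpace ℂ A] [CompleteSpace A]
    [NormedAddCommGroup B] [NormedSpace ℂ B] [CompleteSpace B]
    (MA : BanachAlgebraStr A) (MB : BanachAlgebraStr B) : Type (u + 1) where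
  C : Type u
  [normedC : NormedAddCommGroup C]
  [spaceC : NormedSpace ℂ C]
  [completeC : CompleteSpace C]
  MC : BanachAlgebraStr C
  tmul : A → B → C
  tmul_add_left : ∀ a a' b, tmul (a + a') b = tmul a b + tmul a' b
  tmul_add_right : ∀ a b b', tmul a (b + b') = tmul a b + tmul a b'
  tmul_smul_left : ∀ (r : ℂ) (a b), tmul (r • a) b = r • tmul a b
  tmul_smul_right : ∀ (r : ℂ) (a b), tmul a (r • b) = r • tmul a b
  norm_tmul : ∀ a b, ‖tmul a b‖ ≤ ‖a‖ * ‖b‖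
  dense_span : Dense (Submodule.span ℂ (Set.range fun p : A × B => tmul p.1 p.2) : Set C)
  lift : ∀ (Y : Type u) [NormedAddCommGroup Y] [NormedSpace ℂ Y] [CompleteSpace Y]
      (Φ : A → B → Y) (K : ℝ),
      (∀ a a' b, Φ (a + a') b = Φ a b + Φ a' b) →
      (∀ a b b', Φ a (b + b') = Φ a b + Φ a b') →
      (∀ (r : ℂ) (a b), Φ (r • a) b = r • Φ a b) →
      (∀ (r : ℂ) (a b), Φ a (r • b) = r • Φ a b) →
      (∀ a b, ‖Φ a b‖ ≤ K * (‖a‖ * ‖b‖)) →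
      ∃ L : C →L[ℂ] Y, (∀ a b, L (tmul a b) = Φ a b) ∧ ‖L‖ ≤ K
  tmul_mul : ∀ a a' b b',
    MC.mul (tmul a b) (tmul a' b') = tmul (MA.mul a a') (MB.mul b b')

attribute [instance] TensorAlgData.normedC TensorAlgData.spaceC TensorAlgData.completeC

/-- The `ℓ¹`-Munn matrix space `𝕄_Λ(A)`: `Λ × Λ` matrices over `A` with summable
entrywise norms. -/
abbrev MatL1 (Λ : Type) (A : Type) [NormedAddCommGroup A] : Type :=
  lp (fun _ : Λ × Λ => A) 1

/-!
`θ` is the `ℓ¹`-sum of the contractions `a ↦ a ⊗ E_ij`, so `‖θ f‖ ≤ ‖f‖`. The universal property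
of `⊗̂`, applied to the contractive bilinear map `(a, m) ↦ (m_ij • a)`, gives a contraction `L`
back; `L ∘ θ` is the identity on matrix units and `θ ∘ L` on elementary tensors, and both span
densely, so `θ` is an isometric isomorphism. Since `E_ij E_kl = δ_jk E_il`, `θ` is multiplicative on
pairs of matrix units, hence everywhere by continuity of both sides in each variable.
-/

namespace lp

section SumL

variable {𝕜 : Type*} [NontriviallyNormedField 𝕜] {ι : Type*} {E : ι → Type*}
  [∀ i, NormedAddCommGroup (E i)] [∀ i, NormedSpace 𝕜 (E i)]
  {F : Type*} [NormedAddCommGroup F] [NormedSpace 𝕜 F]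

theorem hasSum_norm_of_one (f : lp E 1) : HasSum (fun i => ‖f i‖) ‖f‖ := by
  simpa using lp.hasSum_norm (p := 1) (by norm_num) f

theorem ext_continuousLinearMap_of_one [DecidableEq ι] {φ ψ : lp E 1 →L[𝕜] F}
    (h : ∀ i a, φ (lp.single 1 i a) = ψ (lp.single 1 i a)) : φ = ψ :=
  lp.ext_continuousLinearMap ENNReal.one_ne_top fun i => ContinuousLinearMap.ext (h i)

variable [CompleteSpace F] (φ : ∀ i, E i →L[𝕜] F) {C : ℝ} (hφ : ∀ i, ‖φ i‖ ≤ C)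
include hφ

theorem summable_apply_of_opNorm_le (f : lp E 1) : Summable fun i => φ i (f i) :=
  .of_norm_bounded ((hasSum_norm_of_one f).summable.mul_left C)
    fun i => (φ i).le_of_opNorm_le (hφ i) (f i)

noncomputable def sumL : lp E 1 →L[𝕜] F :=
  LinearMap.mkContinuous
    { toFun f := ∑' i, φ i (f i)
      map_add' f g := by
        simp only [lp.coeFn_add, Pi.add_apply, map_add]
        exact (summable_apply_of_opNorm_le φ hφ f).tsum_add
          (summable_apply_of_opNorm_le φ hφ g)
      map_smul' c f := by
        simp only [lp.coeFn_smul, Pi.smul_apply, map_smul, RingHom.id_apply]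
        exact (summable_apply_of_opNorm_le φ hφ f).tsum_const_smul c }
    C fun f => tsum_of_norm_bounded ((hasSum_norm_of_one f).mul_left C)
      fun i => (φ i).le_of_opNorm_le (hφ i) (f i)

theorem sumL_apply (f : lp E 1) : sumL φ hφ f = ∑' i, φ i (f i) := rfl

theorem norm_sumL_apply_le (f : lp E 1) : ‖sumL φ hφ f‖ ≤ C * ‖f‖ :=
  tsum_of_norm_bounded ((hasSum_norm_of_one f).mul_left C)
    fun i => (φ i).le_of_opNorm_le (hφ i) (f i)

@[simp]
theorem sumL_single [DecidableEq ι] (i : ι) (a : E i) :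
    sumL φ hφ (lp.single 1 i a) = φ i a := by
  rw [sumL_apply, tsum_eq_single i fun j hj => by simp [lp.single_apply, hj],
    lp.single_apply_self]

end SumL

section SmulConst

variable {𝕜 : Type*} [NontriviallyNormedField 𝕜] {ι : Type*} {E : Type*}
  [NormedAddCommGroup E] [NormedSpace 𝕜 E]

theorem memℓp_smul_const (m : lp (fun _ : ι => 𝕜) 1) (a : E) : Memℓp (fun i => m i • a) 1 :=
  memℓp_gen (by simpa [norm_smul] using (hasSum_norm_of_one m).summable.mul_right ‖a‖)

/-- The elementary tensor `a ⊗ m` of `E ⊗̂ ℓ¹(ι)`, read as an element of `ℓ¹(ι, E)`. -/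
def smulConst (m : lp (fun _ : ι => 𝕜) 1) (a : E) : lp (fun _ : ι => E) 1 :=
  ⟨fun i => m i • a, memℓp_smul_const m a⟩

@[simp]
theorem smulConst_apply (m : lp (fun _ : ι => 𝕜) 1) (a : E) (i : ι) :
    smulConst m a i = m i • a := rfl

@[simp]
theorem smulConst_single [DecidableEq ι] (i : ι) (c : 𝕜) (a : E) :
    smulConst (lp.single 1 i c) a = lp.single 1 i (c • a) := by
  ext j
  by_cases h : j = i <;> simp [h]

theorem norm_smulConst (m : lp (fun _ : ι => 𝕜) 1) (a : E) :
    ‖smulConst m a‖ = ‖a‖ * ‖m‖ := by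
  refine (hasSum_norm_of_one (smulConst m a)).unique ?_
  simpa [norm_smul, mul_comm] using (hasSum_norm_of_one m).mul_left ‖a‖

noncomputable def smulConstL : E →L[𝕜] lp (fun _ : ι => 𝕜) 1 →L[𝕜] lp (fun _ : ι => E) 1 :=
  LinearMap.mkContinuous₂
    (LinearMap.mk₂ 𝕜 (fun (a : E) (m : lp (fun _ : ι => 𝕜) 1) => smulConst m a)
      (fun a a' m => by ext i; simp [smul_add])
      (fun c a m => by ext i; simp [smul_comm c])
      (fun a m m' => by ext i; simp [add_smul])
      (fun c a m => by ext i; simp [mul_smul]))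
    1 fun a m => by simp [norm_smulConst]

@[simp]
theorem smulConstL_apply (a : E) (m : lp (fun _ : ι => 𝕜) 1) :
    smulConstL a m = smulConst m a := rfl

theorem opNorm_smulConstL_le : ‖(smulConstL : E →L[𝕜] lp (fun _ : ι => 𝕜) 1 →L[𝕜] _)‖ ≤ 1 :=
  LinearMap.mkContinuous₂_norm_le _ zero_le_one _

end SmulConst

end lp

namespace TensorAlgData

section Lift

variable {X Y : Type u} [NormedAddCommGroup X] [NormedSpace ℂ X] [CompleteSpace X]
  [NormedAddCommGroup Y] [NormedSpace ℂ Y] [CompleteSpace Y]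
  {MX : BanachAlgebraStr X} {MY : BanachAlgebraStr Y}

noncomputable def tmulL (T : TensorAlgData MX MY) : X →L[ℂ] Y →L[ℂ] T.C :=
  LinearMap.mkContinuous₂
    (LinearMap.mk₂ ℂ T.tmul T.tmul_add_left T.tmul_smul_left T.tmul_add_right T.tmul_smul_right)
    1 fun a b => by simpa [mul_assoc] using T.norm_tmul a b

@[simp]
theorem tmulL_apply (T : TensorAlgData MX MY) (a : X) (b : Y) : T.tmulL a b = T.tmul a b := rfl

theorem exists_lift (T : TensorAlgData MX MY) {Z : Type u} [NormedAddCommGroup Z]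
    [NormedSpace ℂ Z] [CompleteSpace Z] (B : X →L[ℂ] Y →L[ℂ] Z) :
    ∃ L : T.C →L[ℂ] Z, (∀ a b, L (T.tmul a b) = B a b) ∧ ‖L‖ ≤ ‖B‖ :=
  T.lift Z (fun a b => B a b) ‖B‖ (fun a a' b => by simp) (fun a b b' => by simp)
    (fun c a b => by simp) (fun c a b => by simp) fun a b => by
      simpa [mul_assoc] using B.le_opNorm₂ a b

end Lift

section SumTmulSingle

variable {X : Type u} [NormedAddCommGroup X] [NormedSpace ℂ X] [CompleteSpace X]
  {ι : Type u} [DecidableEq ι] {MX : BanachAlgebraStr X}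
  {MB : BanachAlgebraStr (lp (fun _ : ι => ℂ) 1)} (T : TensorAlgData MX MB)

theorem norm_tmulL_flip_single_le (i : ι) : ‖T.tmulL.flip (lp.single 1 i 1)‖ ≤ 1 :=
  ContinuousLinearMap.opNorm_le_bound _ zero_le_one fun a => by
    simpa [lp.norm_single] using T.norm_tmul a (lp.single 1 i 1)

/-- The map `θ : f ↦ ∑ i, f i ⊗ eᵢ` from `ℓ¹(ι, X)` to `X ⊗̂ ℓ¹(ι)`. -/
noncomputable def sumTmulSingle : lp (fun _ : ι => X) 1 →L[ℂ] T.C :=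
  lp.sumL (fun i => T.tmulL.flip (lp.single 1 i 1)) T.norm_tmulL_flip_single_le

@[simp]
theorem sumTmulSingle_single (i : ι) (a : X) :
    T.sumTmulSingle (lp.single 1 i a) = T.tmul a (lp.single 1 i 1) := by
  simp [sumTmulSingle]

theorem norm_sumTmulSingle_apply_le (f : lp (fun _ : ι => X) 1) :
    ‖T.sumTmulSingle f‖ ≤ ‖f‖ := by
  simpa [sumTmulSingle] using lp.norm_sumL_apply_le _ T.norm_tmulL_flip_single_le f

theorem sumTmulSingle_smulConst (a : X) (m : lp (fun _ : ι => ℂ) 1) :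
    T.sumTmulSingle (lp.smulConst m a) = T.tmul a m := by
  have h : T.sumTmulSingle.comp (lp.smulConstL a) = T.tmulL a :=
    lp.ext_continuousLinearMap_of_one fun i c => by
      have hc : (lp.single 1 i c : lp (fun _ : ι => ℂ) 1) = c • lp.single 1 i 1 := by
        rw [← lp.single_smul, smul_eq_mul, mul_one]
      rw [ContinuousLinearMap.comp_apply, lp.smulConstL_apply, lp.smulConst_single,
        sumTmulSingle_single, tmulL_apply, hc, T.tmul_smul_left, T.tmul_smul_right]
  exact DFunLike.congr_fun h m

theorem exists_linearIsometryEquiv_eq_sumTmulSingle :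
    ∃ θ : lp (fun _ : ι => X) 1 ≃ₗᵢ[ℂ] T.C, ∀ f, θ f = T.sumTmulSingle f := by
  obtain ⟨L, hL, hL_norm⟩ := T.exists_lift (lp.smulConstL (𝕜 := ℂ) (ι := ι) (E := X))
  have hLθ : Function.LeftInverse L T.sumTmulSingle := by
    have h : L.comp T.sumTmulSingle = .id ℂ _ :=
      lp.ext_continuousLinearMap_of_one fun i a => by simp [hL]
    exact DFunLike.congr_fun h
  have hθL : Function.RightInverse L T.sumTmulSingle := by
    have h : T.sumTmulSingle.comp L = .id ℂ _ :=
      ContinuousLinearMap.ext_on T.dense_span (by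
        rintro _ ⟨⟨a, m⟩, rfl⟩
        simp [hL, sumTmulSingle_smulConst])
    exact DFunLike.congr_fun h
  have hL_le (x : T.C) : ‖L x‖ ≤ ‖x‖ :=
    (L.le_of_opNorm_le (hL_norm.trans lp.opNorm_smulConstL_le) x).trans_eq (one_mul _)
  have hnorm (f : lp (fun _ : ι => X) 1) : ‖T.sumTmulSingle f‖ = ‖f‖ := by
    refine le_antisymm (T.norm_sumTmulSingle_apply_le f) ?_
    calc ‖f‖ = ‖L (T.sumTmulSingle f)‖ := by rw [hLθ f]
      _ ≤ ‖T.sumTmulSingle f‖ := hL_le _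
  exact ⟨{ (ContinuousLinearEquiv.equivOfInverse _ L hLθ hθL).toLinearEquiv with
    norm_map' := hnorm }, fun _ => rfl⟩

end SumTmulSingle

end TensorAlgData

namespace BanachAlgebraStr

variable {X : Type*} [NormedAddCommGroup X] [NormedSpace ℂ X] [CompleteSpace X]

noncomputable def mulL (M : BanachAlgebraStr X) : X →L[ℂ] X →L[ℂ] X :=
  LinearMap.mkContinuous₂ (LinearMap.mk₂ ℂ M.mul M.add_mul' M.smul_mul' M.mul_add' M.mul_smul')
    M.bound.choose M.bound.choose_spec

@[simp]
theorem mulL_apply (M : BanachAlgebraStr X) (a b : X) : M.mulL a b = M.mul a b := rfl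

end BanachAlgebraStr

theorem lp.map_mul_of_map_mul_single {ι : Type*} [DecidableEq ι] {E : ι → Type*}
    [∀ i, NormedAddCommGroup (E i)] [∀ i, NormedSpace ℂ (E i)] [∀ i, CompleteSpace (E i)]
    {F : Type*} [NormedAddCommGroup F] [NormedSpace ℂ F] [CompleteSpace F]
    (M : BanachAlgebraStr (lp E 1)) (N : BanachAlgebraStr F) (θ : lp E 1 →L[ℂ] F)
    (h : ∀ i j a b, θ (M.mul (lp.single 1 i a) (lp.single 1 j b))
      = N.mul (θ (lp.single 1 i a)) (θ (lp.single 1 j b)))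
    (f g : lp E 1) : θ (M.mul f g) = N.mul (θ f) (θ g) := by
  have h_single (j : ι) (b : E j) (f : lp E 1) :
      θ (M.mul f (lp.single 1 j b)) = N.mul (θ f) (θ (lp.single 1 j b)) := by
    have := lp.ext_continuousLinearMap_of_one
      (φ := θ.comp (M.mulL.flip (lp.single 1 j b)))
      (ψ := (N.mulL.flip (θ (lp.single 1 j b))).comp θ) fun i a => h i j a b
    exact DFunLike.congr_fun this f
  have := lp.ext_continuousLinearMap_of_one (φ := θ.comp (M.mulL f))
    (ψ := (N.mulL (θ f)).comp θ) fun j b => h_single j b f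
  exact DFunLike.congr_fun this g

theorem MatL1.single_mul_single {Λ R : Type} [DecidableEq Λ] [NonUnitalNormedRing R]
    (μ : MatL1 Λ R → MatL1 Λ R → MatL1 Λ R)
    (hμ : ∀ f g i k, μ f g (i, k) = ∑' j, f (i, j) * g (j, k)) (i j k l : Λ) (a b : R) :
    μ (lp.single 1 (i, j) a) (lp.single 1 (k, l) b)
      = if j = k then lp.single 1 (i, l) (a * b) else 0 := by
  ext ⟨i', l'⟩
  rw [hμ, tsum_eq_single j fun j' hj' => by simp [Pi.single_apply, hj']]
  split_ifs with h
  · subst h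
    by_cases hi : i' = i <;> by_cases hl : l' = l <;> simp [hi, hl]
  · simp [Pi.single_apply, h]

theorem munn_tensor_iso_general {Λ : Type} [DecidableEq Λ] {A : Type}
    [NonUnitalNormedRing A] [NormedSpace ℂ A] [CompleteSpace A]
    (MA : BanachAlgebraStr A) (hMA : ∀ a b : A, MA.mul a b = a * b)
    (MC : BanachAlgebraStr (MatL1 Λ ℂ))
    (hMC : ∀ (f g : MatL1 Λ ℂ) (i k : Λ),
      (MC.mul f g) (i, k) = ∑' j : Λ, f (i, j) * g (j, k))
    (MM : BanachAlgebraStr (MatL1 Λ A))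
    (hMM : ∀ (f g : MatL1 Λ A) (i k : Λ),
      (MM.mul f g) (i, k) = ∑' j : Λ, f (i, j) * g (j, k))
    (T : TensorAlgData MA MC) :
    ∃ θ : MatL1 Λ A ≃ₗᵢ[ℂ] T.C,
      (∀ f g : MatL1 Λ A, θ (MM.mul f g) = T.MC.mul (θ f) (θ g)) ∧
      ∀ (i j : Λ) (a : A),
        θ (lp.single 1 (i, j) a) = T.tmul a (lp.single 1 (i, j) (1 : ℂ)) := by
  obtain ⟨θ, hθ⟩ := T.exists_linearIsometryEquiv_eq_sumTmulSingle
  have h_single (i j : Λ) (a : A) :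
      θ (lp.single 1 (i, j) a) = T.tmul a (lp.single 1 (i, j) 1) := by
    rw [hθ, T.sumTmulSingle_single]
  refine ⟨θ, lp.map_mul_of_map_mul_single MM T.MC
    θ.toContinuousLinearEquiv.toContinuousLinearMap fun ⟨i, j⟩ ⟨k, l⟩ a b => ?_, h_single⟩
  simp only [ContinuousLinearEquiv.coe_coe, LinearIsometryEquiv.coe_toContinuousLinearEquiv]
  rw [MatL1.single_mul_single MM.mul hMM, h_single, h_single, T.tmul_mul, hMA,
    MatL1.single_mul_single MC.mul hMC]
  split_ifs
  · rw [h_single, mul_one]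
  · rw [map_zero, ← T.tmulL_apply, map_zero]

/-- For a Banach algebra `A` and a nonempty index set `Λ`, the map
`θ : 𝕄_Λ(A) → A ⊗̂ 𝕄_Λ(ℂ)`, `(a_{ij}) ↦ ∑_{i,j} a_{ij} ⊗ E_{ij}`, is an isometric
algebra isomorphism.  Here `𝕄_Λ(A)` carries matrix multiplication
(`MM`, entrywise `∑_j a_{ij} b_{jk}`), `𝕄_Λ(ℂ)` likewise (`MC`), and `A ⊗̂ 𝕄_Λ(ℂ)` is
any realization `T` of the projective tensor product of the Banach algebras `A` and
`𝕄_Λ(ℂ)`.  The isomorphism `θ` is characterized by being linear, isometric, bijective,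
multiplicative, and sending `a · E_{ij}` to `a ⊗ E_{ij}`. -/
theorem munn_tensor_iso {Λ : Type} [Nonempty Λ] [DecidableEq Λ] {A : Type}
    [NonUnitalNormedRing A] [NormedSpace ℂ A] [IsScalarTower ℂ A A]
    [SMulCommClass ℂ A A] [CompleteSpace A]
    (MA : BanachAlgebraStr A) (hMA : ∀ a b : A, MA.mul a b = a * b)
    (MC : BanachAlgebraStr (MatL1 Λ ℂ))
    (hMC : ∀ (f g : MatL1 Λ ℂ) (i k : Λ),
      (MC.mul f g) (i, k) = ∑' j : Λ, f (i, j) * g (j, k))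
    (MM : BanachAlgebraStr (MatL1 Λ A))
    (hMM : ∀ (f g : MatL1 Λ A) (i k : Λ),
      (MM.mul f g) (i, k) = ∑' j : Λ, f (i, j) * g (j, k))
    (T : TensorAlgData MA MC) :
    ∃ θ : MatL1 Λ A ≃ₗᵢ[ℂ] T.C,
      (∀ f g : MatL1 Λ A, θ (MM.mul f g) = T.MC.mul (θ f) (θ g)) ∧
      ∀ (i j : Λ) (a : A),
        θ (lp.single 1 (i, j) a) = T.tmul a (lp.single 1 (i, j) (1 : ℂ)) :=
  munn_tensor_iso_general MA hMA MC hMC MM hMM T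
end

section
/- The Banach algebra $\mathbb{M}_\Lambda(\mathbb{C})$ of $\Lambda \times \Lambda$ complex matrices $(a_{ij})$ with $\sum_{i,j}|a_{ij}| < \infty$, for an infinite index set $\Lambda$, has no central approximate identity (a net $(e_\alpha)$ with $e_\alpha x = x e_\alpha$ for all $x$ and $e_\alpha x \to x$). Consequently it is not pseudo-contractible, although it is biprojective. -/
open Filter Topology

universe u

variable {A : Type u} [NormedAddCommGroup A] [NormedSpace ℂ A] [CompleteSpace A]

/-- `A` is pseudo-contractible: a net `(m_i)` in `A ⊗̂ A` with `a · m_i = m_i · a` for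
all `a` and `π_A(m_i) a → a`. -/
def PseudoContractible {A : Type u} [NormedAddCommGroup A] [NormedSpace ℂ A]
    [CompleteSpace A] (M : BanachAlgebraStr A) : Prop :=
  ∃ T : TensorData M, ∃ (ι : Type u) (l : Filter ι) (m : ι → T.X), l.NeBot ∧
    (∀ i a, T.lsmul a (m i) = T.rsmul a (m i)) ∧
    ∀ a : A, Tendsto (fun i => M.mul (T.projL (m i)) a) l (𝓝 a)

/-- `A` is biprojective: the multiplication map `π_A : A ⊗̂ A → A` has a continuous
`A`-bimodule right inverse. -/
def Biprojective {A : Type u} [NormedAddCommGroup A] [NormedSpace ℂ A]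
    [CompleteSpace A] (M : BanachAlgebraStr A) : Prop :=
  ∃ T : TensorData M, ∃ ρ : A →L[ℂ] T.X,
    (∀ a x, ρ (M.mul a x) = T.lsmul a (ρ x)) ∧
    (∀ a x, ρ (M.mul x a) = T.rsmul a (ρ x)) ∧
    ∀ a, T.projL (ρ a) = a

/-- The `ℓ¹`-Munn matrix algebra underlying space `𝕄_Λ(ℂ)`. -/
abbrev MatL1C (Λ : Type) : Type := lp (fun _ : Λ × Λ => ℂ) 1

/-!
A central element `e` of `𝕄_Λ(ℂ)` commutes with every matrix unit `E_pq`; comparing the entries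
of `e E_pq` and `E_pq e` shows that `e` is a constant diagonal matrix, and a constant diagonal is
summable over an infinite `Λ` only if it is zero. A central approximate identity would thus vanish
identically, which is absurd. If `(m_i)` witnesses pseudo-contractibility, then `(π(m_i))` is a
central approximate identity, because `π` is a bimodule map.

For biprojectivity, `ℓ¹(α) ⊗̂ ℓ¹(β)` is realized as `ℓ¹(α × β)`: a bounded bilinear map `B` lifts
by sending the basis vector `δ_(i,j)` to `B δ_i δ_j`. Fixing `k ∈ Λ`, the contraction
`E_ij ↦ E_ik ⊗ E_kj` splits the multiplication, and it is a bimodule map because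
`E_ij E_kl = δ_jk E_il`.
-/

namespace BanachAlgebraStr

variable (M : BanachAlgebraStr A)

noncomputable def mulCLM : A →L[ℂ] A →L[ℂ] A :=
  (LinearMap.mk₂ ℂ M.mul M.add_mul' M.smul_mul' M.mul_add' M.mul_smul').mkContinuous₂
    M.bound.choose M.bound.choose_spec

@[simp]
lemma mulCLM_apply (a b : A) : M.mulCLM a b = M.mul a b := rfl

def HasCentralApproxId : Prop :=
  ∃ (ι : Type u) (l : Filter ι) (e : ι → A), l.NeBot ∧
    (∀ i x, M.mul (e i) x = M.mul x (e i)) ∧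
    ∀ x, Tendsto (fun i => M.mul (e i) x) l (𝓝 x)

theorem not_hasCentralApproxId [Nontrivial A]
    (hcenter : ∀ e : A, (∀ x, M.mul e x = M.mul x e) → e = 0) : ¬ M.HasCentralApproxId := by
  rintro ⟨ι, l, e, hl, he_comm, he_lim⟩
  obtain ⟨x, hx⟩ := exists_ne (0 : A)
  have hzero : ∀ i, M.mul (e i) x = 0 := fun i => by
    rw [hcenter (e i) (he_comm i), ← M.mulCLM_apply, map_zero, zero_apply]
  have hlim := he_lim x
  simp only [hzero] at hlim
  exact hx (tendsto_nhds_unique hlim tendsto_const_nhds)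

end BanachAlgebraStr

namespace TensorData

variable {M : BanachAlgebraStr A} (T : TensorData M)

lemma projL_lsmul (a : A) (m : T.X) : T.projL (T.lsmul a m) = M.mul a (T.projL m) := by
  have : T.projL.comp (T.lsmul a) = (M.mulCLM a).comp T.projL := by
    refine ContinuousLinearMap.ext_on T.dense_span ?_
    rintro _ ⟨⟨b, c⟩, rfl⟩
    simp [T.lsmul_tmul, T.projL_tmul, M.mul_assoc']
  exact DFunLike.congr_fun this m

lemma projL_rsmul (a : A) (m : T.X) : T.projL (T.rsmul a m) = M.mul (T.projL m) a := by
  have : T.projL.comp (T.rsmul a) = (M.mulCLM.flip a).comp T.projL := by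
    refine ContinuousLinearMap.ext_on T.dense_span ?_
    rintro _ ⟨⟨b, c⟩, rfl⟩
    simp [T.rsmul_tmul, T.projL_tmul, M.mul_assoc']
  exact DFunLike.congr_fun this m

end TensorData

theorem PseudoContractible.hasCentralApproxId {M : BanachAlgebraStr A}
    (h : PseudoContractible M) : M.HasCentralApproxId := by
  obtain ⟨T, ι, l, m, hl, hm_comm, hm_lim⟩ := h
  refine ⟨ι, l, fun i => T.projL (m i), hl, fun i x => ?_, hm_lim⟩
  simpa only [T.projL_lsmul, T.projL_rsmul] using (congrArg T.projL (hm_comm i x)).symm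

namespace lp

open scoped ENNReal

variable {𝕜 : Type*} [NontriviallyNormedField 𝕜] {α β : Type*}
  {E : Type*} [NormedAddCommGroup E] [NormedSpace 𝕜 E]

theorem hasSum_norm_one (f : ℓ¹(α, 𝕜)) : HasSum (fun i => ‖f i‖) ‖f‖ := by
  simpa using lp.hasSum_norm (p := 1) (by norm_num) f

instance [Nonempty α] {p : ℝ≥0∞} : Nontrivial ℓ^p(α, 𝕜) := by
  classical
  obtain ⟨i⟩ := ‹Nonempty α›
  refine nontrivial_of_ne (lp.single p i 1) 0 fun h => one_ne_zero (α := 𝕜) ?_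
  simpa using congrArg (fun f : ℓ^p(α, 𝕜) => f i) h

section TsumSMul

variable {y : α → E} {C : ℝ}

theorem norm_tsum_smul_le (hy : ∀ i, ‖y i‖ ≤ C) (h : ℓ¹(α, 𝕜)) :
    ‖∑' i, h i • y i‖ ≤ C * ‖h‖ := by
  simpa [mul_comm C] using tsum_of_norm_bounded ((hasSum_norm_one h).mul_right C) fun i => by
    rw [norm_smul]; exact mul_le_mul_of_nonneg_left (hy i) (norm_nonneg _)

variable [CompleteSpace E]

theorem summable_smul_of_norm_le (hy : ∀ i, ‖y i‖ ≤ C) (h : ℓ¹(α, 𝕜)) :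
    Summable fun i => h i • y i :=
  .of_norm_bounded ((hasSum_norm_one h).summable.mul_right C) fun i => by
    rw [norm_smul]; exact mul_le_mul_of_nonneg_left (hy i) (norm_nonneg _)

variable (y) in
noncomputable def tsumSMul (hy : ∀ i, ‖y i‖ ≤ C) : ℓ¹(α, 𝕜) →L[𝕜] E :=
  LinearMap.mkContinuous
    { toFun h := ∑' i, h i • y i
      map_add' h h' := by
        simp only [coeFn_add, Pi.add_apply, add_smul,
          (summable_smul_of_norm_le hy h).tsum_add (summable_smul_of_norm_le hy h')]
      map_smul' c h := by
        simp only [coeFn_smul, Pi.smul_apply, smul_eq_mul, mul_smul,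
          (summable_smul_of_norm_le hy h).tsum_const_smul, RingHom.id_apply] }
    C (norm_tsum_smul_le hy)

theorem tsumSMul_apply (hy : ∀ i, ‖y i‖ ≤ C) (h : ℓ¹(α, 𝕜)) :
    tsumSMul y hy h = ∑' i, h i • y i := rfl

theorem norm_tsumSMul_le (hy : ∀ i, ‖y i‖ ≤ C) (hC : 0 ≤ C) :
    ‖(tsumSMul y hy : ℓ¹(α, 𝕜) →L[𝕜] E)‖ ≤ C :=
  LinearMap.mkContinuous_norm_le _ hC _

@[simp]
theorem tsumSMul_single_one [DecidableEq α] (hy : ∀ i, ‖y i‖ ≤ C) (i : α) :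
    tsumSMul y hy (lp.single 1 i (1 : 𝕜)) = y i := by
  rw [tsumSMul_apply, tsum_eq_single i fun j hj => by simp [hj]]
  simp

end TsumSMul

section TensorProduct

theorem hasSum_norm_mul_norm (f : ℓ¹(α, 𝕜)) (g : ℓ¹(β, 𝕜)) :
    HasSum (fun r : α × β => ‖f r.1‖ * ‖g r.2‖) (‖f‖ * ‖g‖) := by
  have hf := hasSum_norm_one f
  have hg := hasSum_norm_one g
  have hfg := hf.summable.mul_of_nonneg hg.summable (fun _ => norm_nonneg _) fun _ => norm_nonneg _
  have hprod := HasSum.mul (α := ℝ) hf hg hfg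
  exact hprod

def tmul (f : ℓ¹(α, 𝕜)) (g : ℓ¹(β, 𝕜)) : ℓ¹(α × β, 𝕜) :=
  ⟨fun r => f r.1 * g r.2, memℓp_gen (by simpa using (hasSum_norm_mul_norm f g).summable)⟩

@[simp]
theorem tmul_apply (f : ℓ¹(α, 𝕜)) (g : ℓ¹(β, 𝕜)) (r : α × β) : tmul f g r = f r.1 * g r.2 :=
  rfl

theorem norm_tmul (f : ℓ¹(α, 𝕜)) (g : ℓ¹(β, 𝕜)) : ‖tmul f g‖ = ‖f‖ * ‖g‖ :=
  (hasSum_norm_one (tmul f g)).unique (by simpa using hasSum_norm_mul_norm f g)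

theorem add_tmul (f f' : ℓ¹(α, 𝕜)) (g : ℓ¹(β, 𝕜)) : tmul (f + f') g = tmul f g + tmul f' g := by
  ext r; simp [add_mul]

theorem tmul_add (f : ℓ¹(α, 𝕜)) (g g' : ℓ¹(β, 𝕜)) : tmul f (g + g') = tmul f g + tmul f g' := by
  ext r; simp [mul_add]

theorem smul_tmul (c : 𝕜) (f : ℓ¹(α, 𝕜)) (g : ℓ¹(β, 𝕜)) : tmul (c • f) g = c • tmul f g := by
  ext r; simp [mul_assoc]

theorem tmul_smul (c : 𝕜) (f : ℓ¹(α, 𝕜)) (g : ℓ¹(β, 𝕜)) : tmul f (c • g) = c • tmul f g := by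
  ext r; simp [mul_left_comm]

@[simp]
theorem zero_tmul (g : ℓ¹(β, 𝕜)) : tmul (0 : ℓ¹(α, 𝕜)) g = 0 := by
  ext r; simp

@[simp]
theorem tmul_zero (f : ℓ¹(α, 𝕜)) : tmul f (0 : ℓ¹(β, 𝕜)) = 0 := by
  ext r; simp

variable (𝕜 α β) in
noncomputable def tmulCLM : ℓ¹(α, 𝕜) →L[𝕜] ℓ¹(β, 𝕜) →L[𝕜] ℓ¹(α × β, 𝕜) :=
  LinearMap.mkContinuous₂ (LinearMap.mk₂ 𝕜 tmul add_tmul smul_tmul tmul_add tmul_smul :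
    ℓ¹(α, 𝕜) →ₗ[𝕜] ℓ¹(β, 𝕜) →ₗ[𝕜] ℓ¹(α × β, 𝕜)) 1 fun f g => by
    rw [LinearMap.mk₂_apply, norm_tmul, one_mul]

@[simp]
theorem tmulCLM_apply (f : ℓ¹(α, 𝕜)) (g : ℓ¹(β, 𝕜)) : tmulCLM 𝕜 α β f g = tmul f g := rfl

end TensorProduct

section Single

variable [DecidableEq α] [DecidableEq β]

theorem dense_span_single_one {p : ℝ≥0∞} [Fact (1 ≤ p)] (hp : p ≠ ⊤) :
    Dense (Submodule.span 𝕜 (Set.range fun i : α => lp.single p i (1 : 𝕜)) :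
      Set (ℓ^p(α, 𝕜))) := by
  intro f
  refine mem_closure_of_tendsto (lp.hasSum_single hp f) (Eventually.of_forall fun s => ?_)
  refine Submodule.sum_mem _ fun i _ => ?_
  rw [← mul_one (f i), ← smul_eq_mul, lp.single_smul]
  exact Submodule.smul_mem _ _ (Submodule.subset_span ⟨i, rfl⟩)

theorem ext_continuousLinearMap_single_one {F : Type*} [AddCommMonoid F] [Module 𝕜 F]
    [TopologicalSpace F] [T2Space F] {p : ℝ≥0∞} [Fact (1 ≤ p)] (hp : p ≠ ⊤)
    ⦃f g : ℓ^p(α, 𝕜) →L[𝕜] F⦄ (h : ∀ i, f (lp.single p i 1) = g (lp.single p i 1)) :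
    f = g :=
  lp.ext_continuousLinearMap hp fun i => ContinuousLinearMap.ext_ring (h i)

theorem ext_continuousLinearMap₂_single_one {p q : ℝ≥0∞} [Fact (1 ≤ p)] [Fact (1 ≤ q)]
    (hp : p ≠ ⊤) (hq : q ≠ ⊤) ⦃f g : ℓ^p(α, 𝕜) →L[𝕜] ℓ^q(β, 𝕜) →L[𝕜] E⦄
    (h : ∀ i j, f (lp.single p i 1) (lp.single q j 1) = g (lp.single p i 1) (lp.single q j 1)) :
    f = g :=
  ext_continuousLinearMap_single_one hp fun i => ext_continuousLinearMap_single_one hq (h i)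

theorem single_one_tmul_single_one (i : α) (j : β) :
    tmul (lp.single 1 i (1 : 𝕜)) (lp.single 1 j 1) = lp.single 1 (i, j) 1 := by
  ext r
  by_cases h₁ : r.1 = i <;> by_cases h₂ : r.2 = j <;> simp [Pi.single_apply, Prod.ext_iff, *]

theorem dense_span_range_tmul :
    Dense (Submodule.span 𝕜 (Set.range fun p : ℓ¹(α, 𝕜) × ℓ¹(β, 𝕜) => tmul p.1 p.2) :
      Set (ℓ¹(α × β, 𝕜))) :=
  (dense_span_single_one ENNReal.one_ne_top).mono <| Submodule.span_mono <| by
    rintro _ ⟨r, rfl⟩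
    exact ⟨(lp.single 1 r.1 1, lp.single 1 r.2 1), single_one_tmul_single_one r.1 r.2⟩

variable [CompleteSpace E]

noncomputable def tmulLift (B : ℓ¹(α, 𝕜) →L[𝕜] ℓ¹(β, 𝕜) →L[𝕜] E) : ℓ¹(α × β, 𝕜) →L[𝕜] E :=
  tsumSMul (fun r => B (lp.single 1 r.1 1) (lp.single 1 r.2 1)) (C := ‖B‖) fun r => by
    simpa [lp.norm_single] using B.le_opNorm₂ (lp.single 1 r.1 1) (lp.single 1 r.2 1)

theorem tmulLift_tmul (B : ℓ¹(α, 𝕜) →L[𝕜] ℓ¹(β, 𝕜) →L[𝕜] E) (f : ℓ¹(α, 𝕜)) (g : ℓ¹(β, 𝕜)) :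
    tmulLift B (tmul f g) = B f g := by
  have : (ContinuousLinearMap.compL 𝕜 _ _ _ (tmulLift B)).comp (tmulCLM 𝕜 α β) = B :=
    ext_continuousLinearMap₂_single_one ENNReal.one_ne_top ENNReal.one_ne_top fun i j => by
      simp [tmulLift, single_one_tmul_single_one]
  exact DFunLike.congr_fun (DFunLike.congr_fun this f) g

theorem norm_tmulLift_le (B : ℓ¹(α, 𝕜) →L[𝕜] ℓ¹(β, 𝕜) →L[𝕜] E) : ‖tmulLift B‖ ≤ ‖B‖ :=
  norm_tsumSMul_le _ (norm_nonneg B)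

end Single

theorem exists_tmulLift [CompleteSpace E] [Nonempty α] [Nonempty β]
    (B : ℓ¹(α, 𝕜) → ℓ¹(β, 𝕜) → E) (C : ℝ)
    (add_left : ∀ a b c, B (a + b) c = B a c + B b c)
    (add_right : ∀ a b c, B a (b + c) = B a b + B a c)
    (smul_left : ∀ (r : 𝕜) (a b), B (r • a) b = r • B a b)
    (smul_right : ∀ (r : 𝕜) (a b), B a (r • b) = r • B a b)
    (bound : ∀ a b, ‖B a b‖ ≤ C * (‖a‖ * ‖b‖)) :
    ∃ L : ℓ¹(α × β, 𝕜) →L[𝕜] E, (∀ a b, L (tmul a b) = B a b) ∧ ‖L‖ ≤ C := by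
  classical
  obtain ⟨i⟩ := ‹Nonempty α›
  obtain ⟨j⟩ := ‹Nonempty β›
  have hC : 0 ≤ C := by
    simpa [lp.norm_single] using (norm_nonneg _).trans (bound (lp.single 1 i 1) (lp.single 1 j 1))
  let B₂ := (LinearMap.mk₂ 𝕜 B add_left smul_left add_right smul_right).mkContinuous₂ C
    fun a b => (bound a b).trans_eq (mul_assoc _ _ _).symm
  exact ⟨tmulLift B₂, fun a b => tmulLift_tmul B₂ a b,
    (norm_tmulLift_le B₂).trans (LinearMap.mkContinuous₂_norm_le _ hC _)⟩

end lp

section TensorData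

variable {α : Type} [Nonempty α] [DecidableEq α] (M : BanachAlgebraStr (lp (fun _ : α => ℂ) 1))

noncomputable def lp.tensorData : TensorData M where
  X := lp (fun _ : α × α => ℂ) 1
  tmul := lp.tmul
  tmul_add_left := lp.add_tmul
  tmul_add_right := lp.tmul_add
  tmul_smul_left := lp.smul_tmul
  tmul_smul_right := lp.tmul_smul
  norm_tmul a b := (lp.norm_tmul a b).le
  dense_span := lp.dense_span_range_tmul
  lift _ _ _ _ := lp.exists_tmulLift
  lsmul a := lp.tmulLift ((lp.tmulCLM ℂ α α).comp (M.mulCLM a))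
  rsmul a := lp.tmulLift ((lp.tmulCLM ℂ α α).flip.comp (M.mulCLM.flip a)).flip
  lsmul_tmul a b c := by simp [lp.tmulLift_tmul]
  rsmul_tmul a b c := by simp [lp.tmulLift_tmul]
  projL := lp.tmulLift M.mulCLM
  projL_tmul a b := by simp [lp.tmulLift_tmul]

end TensorData

section MatL1

variable {Λ : Type} {MC : BanachAlgebraStr (MatL1C Λ)}

def IsMatrixMul (MC : BanachAlgebraStr (MatL1C Λ)) : Prop :=
  ∀ (f g : MatL1C Λ) (i k : Λ), (MC.mul f g) (i, k) = ∑' j : Λ, f (i, j) * g (j, k)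

variable [DecidableEq Λ]

noncomputable def matrixUnit (i j : Λ) : MatL1C Λ := lp.single 1 (i, j) 1

theorem single_one_eq_matrixUnit (r : Λ × Λ) : lp.single 1 r 1 = matrixUnit r.1 r.2 := rfl

@[simp]
theorem matrixUnit_apply (i j p q : Λ) :
    matrixUnit i j (p, q) = if p = i ∧ q = j then 1 else 0 := by
  simp [matrixUnit, Pi.single_apply, Prod.ext_iff]

theorem norm_matrixUnit (i j : Λ) : ‖matrixUnit i j‖ = 1 := by
  simp [matrixUnit, lp.norm_single]

theorem mul_matrixUnit_apply (hMC : IsMatrixMul MC) (f : MatL1C Λ) (p q i m : Λ) :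
    MC.mul f (matrixUnit p q) (i, m) = if m = q then f (i, p) else 0 := by
  rw [hMC, tsum_eq_single p fun j hj => by simp [hj]]
  simp

theorem matrixUnit_mul_apply (hMC : IsMatrixMul MC) (f : MatL1C Λ) (p q i m : Λ) :
    MC.mul (matrixUnit p q) f (i, m) = if i = p then f (q, m) else 0 := by
  rw [hMC, tsum_eq_single q fun j hj => by simp [hj]]
  simp

theorem matrixUnit_mul_matrixUnit (hMC : IsMatrixMul MC) (i j k l : Λ) :
    MC.mul (matrixUnit i j) (matrixUnit k l) = if j = k then matrixUnit i l else 0 := by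
  ext ⟨p, q⟩
  rw [matrixUnit_mul_apply hMC]
  split_ifs <;> simp_all

theorem eq_zero_of_forall_mul_comm [Infinite Λ] (hMC : IsMatrixMul MC) {e : MatL1C Λ}
    (he : ∀ x, MC.mul e x = MC.mul x e) : e = 0 := by
  have hcomm (p q i m : Λ) : (if m = q then e (i, p) else 0) = if i = p then e (q, m) else 0 := by
    rw [← mul_matrixUnit_apply hMC, ← matrixUnit_mul_apply hMC, he]
  have hoff (i j : Λ) (hij : i ≠ j) : e (i, j) = 0 := by simpa [hij] using hcomm j j i j
  obtain ⟨k⟩ := Infinite.nonempty Λ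
  have hdiag (i : Λ) : e (i, i) = e (k, k) := by simpa using hcomm i k i k
  have hk : e (k, k) = 0 := by
    have hsum : Summable fun i : Λ => ‖e (i, i)‖ :=
      (lp.hasSum_norm_one e).summable.comp_injective fun _ _ h => congrArg Prod.fst h
    simp only [hdiag] at hsum
    simpa using (summable_const_iff _).mp hsum
  ext ⟨i, j⟩
  by_cases hij : i = j
  · subst hij; simp [hdiag i, hk]
  · simp [hoff i j hij]

variable (k : Λ)

noncomputable def matL1Splitting : MatL1C Λ →L[ℂ] lp (fun _ : (Λ × Λ) × (Λ × Λ) => ℂ) 1 :=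
  lp.tsumSMul (fun r : Λ × Λ => lp.tmul (matrixUnit r.1 k) (matrixUnit k r.2)) (C := 1)
    fun r => by simp [lp.norm_tmul, norm_matrixUnit]

theorem matL1Splitting_matrixUnit (i j : Λ) :
    matL1Splitting k (matrixUnit i j) = lp.tmul (matrixUnit i k) (matrixUnit k j) :=
  lp.tsumSMul_single_one _ (i, j)

theorem matL1Splitting_mul_matrixUnit (hMC : IsMatrixMul MC) (a : MatL1C Λ) (i j : Λ) :
    matL1Splitting k (MC.mul a (matrixUnit i j)) =
      lp.tmul (MC.mul a (matrixUnit i k)) (matrixUnit k j) := by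
  have : (matL1Splitting k).comp (MC.mulCLM.flip (matrixUnit i j)) =
      ((lp.tmulCLM ℂ _ _).flip (matrixUnit k j)).comp (MC.mulCLM.flip (matrixUnit i k)) := by
    refine lp.ext_continuousLinearMap_single_one ENNReal.one_ne_top fun r => ?_
    simp only [single_one_eq_matrixUnit, ContinuousLinearMap.comp_apply,
      ContinuousLinearMap.flip_apply, BanachAlgebraStr.mulCLM_apply, lp.tmulCLM_apply,
      matrixUnit_mul_matrixUnit hMC]
    split_ifs <;> simp [matL1Splitting_matrixUnit]
  exact DFunLike.congr_fun this a

theorem matL1Splitting_matrixUnit_mul (hMC : IsMatrixMul MC) (a : MatL1C Λ) (i j : Λ) :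
    matL1Splitting k (MC.mul (matrixUnit i j) a) =
      lp.tmul (matrixUnit i k) (MC.mul (matrixUnit k j) a) := by
  have : (matL1Splitting k).comp (MC.mulCLM (matrixUnit i j)) =
      (lp.tmulCLM ℂ _ _ (matrixUnit i k)).comp (MC.mulCLM (matrixUnit k j)) := by
    refine lp.ext_continuousLinearMap_single_one ENNReal.one_ne_top fun r => ?_
    simp only [single_one_eq_matrixUnit, ContinuousLinearMap.comp_apply,
      BanachAlgebraStr.mulCLM_apply, lp.tmulCLM_apply, matrixUnit_mul_matrixUnit hMC]
    split_ifs <;> simp [matL1Splitting_matrixUnit]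
  exact DFunLike.congr_fun this a

theorem matL1Splitting_mul_left (hMC : IsMatrixMul MC) (a x : MatL1C Λ) :
    matL1Splitting k (MC.mul a x) =
      lp.tmulLift ((lp.tmulCLM ℂ _ _).comp (MC.mulCLM a)) (matL1Splitting k x) := by
  have : (matL1Splitting k).comp (MC.mulCLM a) =
      (lp.tmulLift ((lp.tmulCLM ℂ _ _).comp (MC.mulCLM a))).comp (matL1Splitting k) :=
    lp.ext_continuousLinearMap_single_one ENNReal.one_ne_top fun r => by
      simp [single_one_eq_matrixUnit, matL1Splitting_mul_matrixUnit k hMC,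
        matL1Splitting_matrixUnit, lp.tmulLift_tmul]
  exact DFunLike.congr_fun this x

theorem matL1Splitting_mul_right (hMC : IsMatrixMul MC) (a x : MatL1C Λ) :
    matL1Splitting k (MC.mul x a) =
      lp.tmulLift ((lp.tmulCLM ℂ _ _).flip.comp (MC.mulCLM.flip a)).flip (matL1Splitting k x) := by
  have : (matL1Splitting k).comp (MC.mulCLM.flip a) =
      (lp.tmulLift ((lp.tmulCLM ℂ _ _).flip.comp (MC.mulCLM.flip a)).flip).comp
        (matL1Splitting k) :=
    lp.ext_continuousLinearMap_single_one ENNReal.one_ne_top fun r => by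
      simp [single_one_eq_matrixUnit, matL1Splitting_matrixUnit_mul k hMC,
        matL1Splitting_matrixUnit, lp.tmulLift_tmul]
  exact DFunLike.congr_fun this x

theorem tmulLift_mulCLM_matL1Splitting (hMC : IsMatrixMul MC) (a : MatL1C Λ) :
    lp.tmulLift MC.mulCLM (matL1Splitting k a) = a := by
  have : (lp.tmulLift MC.mulCLM).comp (matL1Splitting k) = ContinuousLinearMap.id ℂ _ :=
    lp.ext_continuousLinearMap_single_one ENNReal.one_ne_top fun r => by
      simp [single_one_eq_matrixUnit, matL1Splitting_matrixUnit, lp.tmulLift_tmul,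
        matrixUnit_mul_matrixUnit hMC]
  exact DFunLike.congr_fun this a

theorem matL1_biprojective [Nonempty Λ] (hMC : IsMatrixMul MC) : Biprojective MC :=
  let k := Classical.arbitrary Λ
  ⟨lp.tensorData MC, matL1Splitting k, matL1Splitting_mul_left k hMC,
    matL1Splitting_mul_right k hMC, tmulLift_mulCLM_matL1Splitting k hMC⟩

end MatL1

/-- For an infinite index set `Λ`, the Banach algebra `𝕄_Λ(ℂ)` (of
`Λ × Λ` complex matrices with `∑_{i,j} |a_{ij}| < ∞`, under matrix multiplication `MC`)
has no central approximate identity; consequently it is not pseudo-contractible,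
although it is biprojective. -/
theorem matL1_no_central_ai {Λ : Type} [Infinite Λ]
    (MC : BanachAlgebraStr (MatL1C Λ))
    (hMC : ∀ (f g : MatL1C Λ) (i k : Λ),
      (MC.mul f g) (i, k) = ∑' j : Λ, f (i, j) * g (j, k)) :
    (¬ ∃ (ι : Type) (l : Filter ι) (e : ι → MatL1C Λ), l.NeBot ∧
        (∀ i x, MC.mul (e i) x = MC.mul x (e i)) ∧
        ∀ x, Tendsto (fun i => MC.mul (e i) x) l (𝓝 x)) ∧
    ¬ PseudoContractible MC ∧ Biprojective MC := by
  classical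
  have hno_cai : ¬ MC.HasCentralApproxId :=
    MC.not_hasCentralApproxId fun _ he => eq_zero_of_forall_mul_comm hMC he
  exact ⟨hno_cai, fun h => hno_cai h.hasCentralApproxId, matL1_biprojective hMC⟩
end
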